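/- If Y₁, ..., Y_m are i.i.d. standard normal random variables, then for every x ∈ ℝ, P(max_{1≤i≤m} Y_i² - 2 log m + log log m ≤ x) → exp(-(1/√π) e^{-x/2}) as m → ∞. -/

import Mathlib

/-!
By independence, `P(max_{i ≤ m} Y_i² ≤ t) = (1 - p)^(m+1)` with `p = P(Y² > t) = 2 P(Y > √t)`.
Since `(-e^{-y²/2} / y)' = (1 + y⁻²) e^{-y²/2}`, the Gaussian tail is squeezed as
`e^{-a²/2} / (a (1 + a⁻²)) ≤ ∫_a^∞ e^{-y²/2} dy ≤ e^{-a²/2} / a` (Mills' ratio), and at the level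
`t = x + 2 log n - log log n`, where `n e^{-t/2} = e^{-x/2} √(log n)`, this gives
`n p → e^{-x/2} / √π`. Hence `(1 - p)^n → exp(-e^{-x/2} / √π)`.
-/

open Real Filter MeasureTheory ProbabilityTheory Set Asymptotics Topology
open scoped NNReal

lemma tendsto_exp_neg_sq_div_two_atTop :
    Tendsto (fun y : ℝ => exp (-y ^ 2 / 2)) atTop (𝓝 0) := by
  have h : Tendsto (fun y : ℝ => y ^ 2 / 2) atTop atTop :=
    (tendsto_pow_atTop two_ne_zero).atTop_div_const two_pos
  exact (tendsto_exp_neg_atTop_nhds_zero.comp h).congr fun y => by simp [neg_div]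

lemma integrableOn_exp_neg_sq_div_two (s : Set ℝ) :
    IntegrableOn (fun y : ℝ => exp (-y ^ 2 / 2)) s := by
  refine ((integrable_exp_neg_mul_sq (by norm_num : (0:ℝ) < 1 / 2)).congr
    (ae_of_all _ fun y => ?_)).integrableOn
  ring_nf

lemma hasDerivAt_neg_exp_neg_sq_div_two_div {y : ℝ} (hy : y ≠ 0) :
    HasDerivAt (fun y => -exp (-y ^ 2 / 2) / y) ((1 + (y ^ 2)⁻¹) * exp (-y ^ 2 / 2)) y := by
  have h := (((hasDerivAt_pow 2 y).neg.div_const 2).exp.neg).div (hasDerivAt_id y) hy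
  refine h.congr_deriv ?_
  simp only [Pi.neg_apply, id]
  field_simp
  ring

lemma integral_Ioi_one_add_inv_sq_mul_exp_neg_sq_div_two {a : ℝ} (ha : 0 < a) :
    IntegrableOn (fun y => (1 + (y ^ 2)⁻¹) * exp (-y ^ 2 / 2)) (Ioi a) ∧
      ∫ y in Ioi a, (1 + (y ^ 2)⁻¹) * exp (-y ^ 2 / 2) = exp (-a ^ 2 / 2) / a := by
  have hderiv : ∀ y ∈ Ici a, HasDerivAt (fun y => -exp (-y ^ 2 / 2) / y)
      ((1 + (y ^ 2)⁻¹) * exp (-y ^ 2 / 2)) y :=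
    fun y hy => hasDerivAt_neg_exp_neg_sq_div_two_div (ha.trans_le hy).ne'
  have hnonneg : ∀ y ∈ Ioi a, 0 ≤ (1 + (y ^ 2)⁻¹) * exp (-y ^ 2 / 2) :=
    fun y _ => by positivity
  have hlim : Tendsto (fun y => -exp (-y ^ 2 / 2) / y) atTop (𝓝 0) := by
    simpa [div_eq_mul_inv] using (tendsto_exp_neg_sq_div_two_atTop.neg).mul tendsto_inv_atTop_zero
  refine ⟨integrableOn_Ioi_deriv_of_nonneg' hderiv hnonneg hlim, ?_⟩
  rw [integral_Ioi_of_hasDerivAt_of_nonneg' hderiv hnonneg hlim]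
  ring

lemma integral_Ioi_exp_neg_sq_div_two_le {a : ℝ} (ha : 0 < a) :
    ∫ y in Ioi a, exp (-y ^ 2 / 2) ≤ exp (-a ^ 2 / 2) / a := by
  obtain ⟨hint, hval⟩ := integral_Ioi_one_add_inv_sq_mul_exp_neg_sq_div_two ha
  rw [← hval]
  refine setIntegral_mono_on (integrableOn_exp_neg_sq_div_two _) hint measurableSet_Ioi
    fun y _ => ?_
  nlinarith [exp_pos (-y ^ 2 / 2), inv_nonneg.2 (sq_nonneg y)]

lemma exp_neg_sq_div_two_div_le_integral_Ioi {a : ℝ} (ha : 0 < a) :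
    exp (-a ^ 2 / 2) / a ≤ (1 + (a ^ 2)⁻¹) * ∫ y in Ioi a, exp (-y ^ 2 / 2) := by
  obtain ⟨hint, hval⟩ := integral_Ioi_one_add_inv_sq_mul_exp_neg_sq_div_two ha
  rw [← hval, ← integral_const_mul]
  refine setIntegral_mono_on hint ((integrableOn_exp_neg_sq_div_two _).const_mul _)
    measurableSet_Ioi fun y hy => ?_
  gcongr
  exact le_of_lt hy

lemma integral_Ioi_exp_neg_sq_div_two_isEquivalent :
    (fun a => ∫ y in Ioi a, exp (-y ^ 2 / 2)) ~[atTop] fun a => exp (-a ^ 2 / 2) / a := by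
  refine isEquivalent_of_tendsto_one ?_
  have hlow : Tendsto (fun a : ℝ => (1 + (a ^ 2)⁻¹)⁻¹) atTop (𝓝 1) := by
    simpa using ((tendsto_inv_atTop_zero.comp (tendsto_pow_atTop two_ne_zero)).const_add
      (1 : ℝ)).inv₀ (by norm_num)
  refine tendsto_of_tendsto_of_tendsto_of_le_of_le' hlow tendsto_const_nhds ?_ ?_
  all_goals filter_upwards [eventually_gt_atTop 0] with a ha
  · rw [Pi.div_apply, inv_le_iff_one_le_mul₀ (by positivity), mul_comm, ← mul_div_assoc,
      one_le_div (by positivity)]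
    exact exp_neg_sq_div_two_div_le_integral_Ioi ha
  · rw [Pi.div_apply, div_le_one (by positivity)]
    exact integral_Ioi_exp_neg_sq_div_two_le ha

noncomputable def gumbelLevel (x s : ℝ) : ℝ := x + 2 * log s - log (log s)

lemma tendsto_add_two_mul_sub_log_div_self (x : ℝ) :
    Tendsto (fun L => (x + 2 * L - log L) / L) atTop (𝓝 2) := by
  have hlog : Tendsto (fun L => log L / L) atTop (𝓝 0) := by
    simpa using isLittleO_log_id_atTop.tendsto_div_nhds_zero
  have hx : Tendsto (fun L => x / L) atTop (𝓝 0) := tendsto_const_nhds.div_atTop tendsto_id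
  refine ((hx.add_const 2).sub hlog).congr' ?_ |>.trans (by simp)
  filter_upwards [eventually_gt_atTop 0] with L hL
  field_simp

lemma tendsto_gumbelLevel_div_log (x : ℝ) :
    Tendsto (fun s => gumbelLevel x s / log s) atTop (𝓝 2) :=
  (tendsto_add_two_mul_sub_log_div_self x).comp tendsto_log_atTop

lemma tendsto_gumbelLevel_atTop (x : ℝ) : Tendsto (gumbelLevel x) atTop atTop := by
  refine ((tendsto_gumbelLevel_div_log x).pos_mul_atTop two_pos tendsto_log_atTop).congr' ?_
  filter_upwards [eventually_gt_atTop 1] with s hs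
  exact div_mul_cancel₀ _ (log_pos hs).ne'

lemma mul_exp_neg_gumbelLevel_div_two {x s : ℝ} (hs : 1 < s) :
    s * exp (-gumbelLevel x s / 2) = exp (-x / 2) * √(log s) := by
  have hlog := log_pos hs
  rw [gumbelLevel, show -(x + 2 * log s - log (log s)) / 2 = -x / 2 - log s + log (log s) / 2 by
    ring, exp_add, exp_sub, exp_log (by linarith), sqrt_eq_rpow, rpow_def_of_pos hlog]
  field_simp

lemma tendsto_mul_exp_neg_gumbelLevel_div_sqrt (x : ℝ) :
    Tendsto (fun s => s * exp (-gumbelLevel x s / 2) / √(gumbelLevel x s)) atTop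
      (𝓝 (exp (-x / 2) / √2)) := by
  have h := tendsto_const_nhds (x := exp (-x / 2)).div
    ((continuous_sqrt.tendsto 2).comp (tendsto_gumbelLevel_div_log x)) (by positivity)
  refine h.congr' ?_
  filter_upwards [eventually_gt_atTop 1, (tendsto_gumbelLevel_atTop x).eventually_gt_atTop 0]
    with s hs ht
  simp only [Pi.div_apply, Function.comp_apply]
  rw [mul_exp_neg_gumbelLevel_div_two hs, sqrt_div' _ (log_pos hs).le]
  field_simp

lemma ProbabilityTheory.iIndepFun.measure_biInter_preimage_eq_pow {Ω ι β : Type*}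
    [MeasurableSpace Ω] [MeasurableSpace β] {P : Measure Ω} {Y : ι → Ω → β} (hindep : iIndepFun Y P)
    (hmeas : ∀ i, AEMeasurable (Y i) P) {μ : Measure β} (hlaw : ∀ i, P.map (Y i) = μ)
    {S : Set β} (hS : MeasurableSet S) (s : Finset ι) :
    P (⋂ i ∈ s, Y i ⁻¹' S) = μ S ^ s.card := by
  have hlaw' : ∀ i, P (Y i ⁻¹' S) = μ S := fun i => by
    rw [← hlaw i, Measure.map_apply_of_aemeasurable (hmeas i) hS]
  rw [hindep.meas_biInter fun i _ => ⟨S, hS, rfl⟩, Finset.prod_congr rfl fun i _ => hlaw' i,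
    Finset.prod_const]

lemma gaussianReal_real_Iio_neg (v : ℝ≥0) (a : ℝ) :
    (gaussianReal 0 v).real (Iio (-a)) = (gaussianReal 0 v).real (Ioi a) := by
  conv_lhs => rw [← neg_zero, ← gaussianReal_map_neg]
  rw [map_measureReal_apply measurable_neg measurableSet_Iio]
  congr 1
  ext y
  simp

lemma gaussianReal_real_sq_le (v : ℝ≥0) {t : ℝ} (ht : 0 ≤ t) :
    (gaussianReal 0 v).real {y | y ^ 2 ≤ t} = 1 - 2 * (gaussianReal 0 v).real (Ioi √t) := by
  have hset : {y : ℝ | y ^ 2 ≤ t} = (Iio (-√t) ∪ Ioi √t)ᶜ := by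
    ext y
    simp [Real.sq_le ht]
  have hdisj : Disjoint (Iio (-√t)) (Ioi √t) :=
    (Ioi_disjoint_Iio_of_le (by linarith [sqrt_nonneg t])).symm
  rw [hset, probReal_compl_eq_one_sub (measurableSet_Iio.union measurableSet_Ioi),
    measureReal_union hdisj measurableSet_Ioi, gaussianReal_real_Iio_neg]
  ring

lemma gaussianReal_real_Ioi (a : ℝ) :
    (gaussianReal 0 1).real (Ioi a) = (√(2 * π))⁻¹ * ∫ y in Ioi a, exp (-y ^ 2 / 2) := by
  rw [measureReal_def, gaussianReal_apply_eq_integral 0 one_ne_zero,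
    ENNReal.toReal_ofReal (setIntegral_nonneg measurableSet_Ioi
      fun y _ => gaussianPDFReal_nonneg 0 1 y), ← integral_const_mul]
  simp [gaussianPDFReal]

lemma tendsto_mul_gaussianReal_Ioi_sqrt_gumbelLevel (x : ℝ) :
    Tendsto (fun s => s * (2 * (gaussianReal 0 1).real (Ioi √(gumbelLevel x s)))) atTop
      (𝓝 (1 / √π * exp (-x / 2))) := by
  have hsqrt : Tendsto (fun s => √(gumbelLevel x s)) atTop atTop :=
    tendsto_sqrt_atTop.comp (tendsto_gumbelLevel_atTop x)
  have htail : (fun s => ∫ y in Ioi √(gumbelLevel x s), exp (-y ^ 2 / 2)) ~[atTop]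
      fun s => exp (-gumbelLevel x s / 2) / √(gumbelLevel x s) := by
    refine (integral_Ioi_exp_neg_sq_div_two_isEquivalent.comp_tendsto hsqrt).congr_right ?_
    filter_upwards [(tendsto_gumbelLevel_atTop x).eventually_ge_atTop 0] with s hs
    simp only [Function.comp_apply, sq_sqrt hs]
  have hlim := (tendsto_mul_exp_neg_gumbelLevel_div_sqrt x).const_mul (2 * (√(2 * π))⁻¹)
  have hconst : 2 * (√(2 * π))⁻¹ * (exp (-x / 2) / √2) = 1 / √π * exp (-x / 2) := by
    rw [sqrt_mul zero_le_two]
    field_simp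
    rw [sq_sqrt zero_le_two]
  rw [hconst] at hlim
  refine ((IsEquivalent.refl (u := fun s => s * (2 * (√(2 * π))⁻¹))).mul htail).tendsto_nhds_iff.2
    (hlim.congr fun s => ?_) |>.congr fun s => ?_
  · simp only [Pi.mul_apply]; ring
  · simp only [Pi.mul_apply, gaussianReal_real_Ioi]; ring

theorem max_sq_gaussian_gumbel_limit_general
    {Ω : Type*} [MeasureSpace Ω]
    (Y : ℕ → Ω → ℝ)
    (hindep : iIndepFun Y ℙ)
    (hmeas : ∀ i, Measurable (Y i))
    (hgauss : ∀ i, Measure.map (Y i) ℙ = gaussianReal 0 1)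
    (x : ℝ) :
    Tendsto
      (fun m : ℕ =>
        (ℙ {ω | (Finset.range (m + 1)).sup' Finset.nonempty_range_add_one
              (fun i => (Y i ω) ^ 2)
            - 2 * Real.log (m + 1) + Real.log (Real.log (m + 1)) ≤ x}).toReal)
      atTop
      (nhds (Real.exp (-(1 / Real.sqrt π) * Real.exp (-x / 2)))) := by
  set p : ℕ → ℝ := fun n => 2 * (gaussianReal 0 1).real (Ioi √(gumbelLevel x n))
  have hp : Tendsto (fun n : ℕ => n * -p n) atTop (𝓝 (-(1 / √π) * exp (-x / 2))) := by
    simpa [neg_mul] using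
      ((tendsto_mul_gaussianReal_Ioi_sqrt_gumbelLevel x).comp tendsto_natCast_atTop_atTop).neg
  refine ((Real.tendsto_one_add_pow_exp_of_tendsto hp).comp (tendsto_add_atTop_nat 1)).congr' ?_
  filter_upwards [(tendsto_gumbelLevel_atTop x).comp (tendsto_natCast_atTop_atTop.comp
    (tendsto_add_atTop_nat 1)) |>.eventually_ge_atTop 0] with m hm
  have hevent : {ω | (Finset.range (m + 1)).sup' Finset.nonempty_range_add_one
        (fun i => (Y i ω) ^ 2) - 2 * log (m + 1) + log (log (m + 1)) ≤ x} =
      ⋂ i ∈ Finset.range (m + 1), Y i ⁻¹' {y | y ^ 2 ≤ gumbelLevel x (m + 1)} := by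
    ext ω
    simp only [mem_ofPred_eq, mem_iInter, mem_preimage, gumbelLevel]
    rw [← Finset.sup'_le_iff Finset.nonempty_range_add_one (fun i => Y i ω ^ 2)]
    constructor <;> intro h <;> linarith
  simp only [Function.comp_apply, Nat.cast_succ] at hm ⊢
  rw [hevent, hindep.measure_biInter_preimage_eq_pow (fun i => (hmeas i).aemeasurable) hgauss
    (measurableSet_le (by fun_prop) measurable_const), ENNReal.toReal_pow, ← measureReal_def,
    gaussianReal_real_sq_le 1 hm, Finset.card_range]
  simp only [p, Nat.cast_succ, sub_eq_add_neg]

theorem max_sq_gaussian_gumbel_limit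
    {Ω : Type*} [MeasureSpace Ω] [IsProbabilityMeasure (ℙ : Measure Ω)]
    (Y : ℕ → Ω → ℝ)
    (hindep : iIndepFun Y ℙ)
    (hmeas : ∀ i, Measurable (Y i))
    (hgauss : ∀ i, Measure.map (Y i) ℙ = gaussianReal 0 1)
    (x : ℝ) :
    Tendsto
      (fun m : ℕ =>
        (ℙ {ω | (Finset.range (m + 1)).sup' Finset.nonempty_range_add_one
              (fun i => (Y i ω) ^ 2)
            - 2 * Real.log (m + 1) + Real.log (Real.log (m + 1)) ≤ x}).toReal)
      atTop
      (nhds (Real.exp (-(1 / Real.sqrt π) * Real.exp (-x / 2)))) :=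
  max_sq_gaussian_gumbel_limit_general Y hindep hmeas hgauss x
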